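/- For a constant-action X-program with θ an odd multiple of π/2, the output is deterministically equal to the sum (over F_2) of all rows of P: P(X = Σ_{p ∈ P} p) = 1. -/

import Mathlib

/-- Hamming weight of a binary vector: number of coordinates equal to 1. -/
def wt {ι : Type*} [Fintype ι] (a : ι → ZMod 2) : ℕ :=
  (Finset.univ.filter fun i => a i = 1).card

/-- Output distribution of the constant-action X-program given by the k-by-n binary
matrix `P` with action `θ`: `P(X = x)`. -/
noncomputable def XProb {k n : ℕ} (P : Matrix (Fin k) (Fin n) (ZMod 2)) (θ : ℝ)
    (x : Fin n → ZMod 2) : ℝ :=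
  ‖∑ a ∈ Finset.univ.filter (fun a : Fin k → ZMod 2 => Matrix.vecMul a P = x),
    (Real.cos θ : ℂ) ^ (k - wt a) * (Complex.I * Real.sin θ) ^ (wt a)‖ ^ 2

/-- The bias of the X-program output distribution in direction `s`:
`P(X ⬝ sᵀ = 0)`, the probability that the output is orthogonal to `s` over `F₂`. -/
noncomputable def bias {k n : ℕ} (P : Matrix (Fin k) (Fin n) (ZMod 2)) (θ : ℝ)
    (s : Fin n → ZMod 2) : ℝ :=
  ∑ x ∈ Finset.univ.filter (fun x : Fin n → ZMod 2 => dotProduct x s = 0), XProb P θ x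

/-!
Odd multiples of `π / 2` are the zeros of `cos`, and when `cos θ = 0` the amplitude `cos θ ^ (k - wt a) * (i sin θ) ^ wt a` vanishes unless
`wt a = k`, i.e. unless `a` is the all-ones vector. So the only surviving term is `a = 1`,
whose image `vecMul 1 P` is the sum of the rows of `P`, and its amplitude `(i sin θ) ^ k` has
modulus one because `sin θ ^ 2 = 1`.
-/

theorem wt_le_card {ι : Type*} [Fintype ι] (a : ι → ZMod 2) : wt a ≤ Fintype.card ι :=
  Finset.card_filter_le _ _

theorem wt_eq_card_iff {ι : Type*} [Fintype ι] {a : ι → ZMod 2} :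
    wt a = Fintype.card ι ↔ a = 1 := by
  rw [wt, ← Finset.card_univ, Finset.card_filter_eq_iff, funext_iff]
  simp

theorem amplitude_of_cos_eq_zero {k : ℕ} {θ : ℝ} (hcos : Real.cos θ = 0)
    (a : Fin k → ZMod 2) :
    (Real.cos θ : ℂ) ^ (k - wt a) * (Complex.I * Real.sin θ) ^ wt a =
      if a = 1 then (Complex.I * Real.sin θ) ^ k else 0 := by
  split_ifs with ha
  · rw [ha, wt_eq_card_iff.mpr rfl, Fintype.card_fin, Nat.sub_self, pow_zero, one_mul]
  · have hlt : wt a < k := by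
      simpa using lt_of_le_of_ne (wt_le_card a) (mt wt_eq_card_iff.mp ha)
    rw [hcos, Complex.ofReal_zero, zero_pow (Nat.sub_ne_zero_of_lt hlt), zero_mul]

theorem norm_I_mul_sin_pow_sq_of_cos_eq_zero {θ : ℝ} (hcos : Real.cos θ = 0) (k : ℕ) :
    ‖(Complex.I * Real.sin θ) ^ k‖ ^ 2 = 1 := by
  have hsin : Real.sin θ ^ 2 = 1 := by nlinarith [Real.sin_sq_add_cos_sq θ]
  rw [norm_pow, norm_mul, Complex.norm_I, one_mul, Complex.norm_real, Real.norm_eq_abs,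
    ← pow_mul, mul_comm k 2, pow_mul, sq_abs, hsin, one_pow]

theorem XProb_of_cos_eq_zero {k n : ℕ} (P : Matrix (Fin k) (Fin n) (ZMod 2)) {θ : ℝ}
    (hcos : Real.cos θ = 0) (x : Fin n → ZMod 2) :
    XProb P θ x = if Matrix.vecMul 1 P = x then 1 else 0 := by
  simp_rw [XProb, amplitude_of_cos_eq_zero hcos, Finset.sum_ite_eq', Finset.mem_filter,
    Finset.mem_univ, true_and]
  split_ifs
  · exact norm_I_mul_sin_pow_sq_of_cos_eq_zero hcos k
  · simp

theorem xprog_theta_odd_multiple_half_pi {k n : ℕ} (P : Matrix (Fin k) (Fin n) (ZMod 2))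
    (θ : ℝ) (h : ∃ m : ℤ, θ = (2 * m + 1) * (Real.pi / 2)) :
    XProb P θ (∑ i : Fin k, P i) = 1 := by
  have hcos : Real.cos θ = 0 := by
    obtain ⟨m, rfl⟩ := h
    exact Real.cos_eq_zero_iff.mpr ⟨m, by ring⟩
  rw [XProb_of_cos_eq_zero P hcos, if_pos (Matrix.one_vecMul P)]
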